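/- arXiv:gr-qc/9711022 — 2 statements merged into one kernel-verified Lean document; each statement's English description precedes it below -/
import Mathlib

section
/- Non-existence in dimension n ≥ 6. For every n ≥ 6 there exists a smooth Weyl candidate W_{abcd} on flat ℝⁿ (for any chosen signature of the constant metric η) such that no three times continuously differentiable tensor field L_{abc} with L_{abc} = L_{[ab]c} satisfies equation (4); i.e., a Lanczos potential for Weyl candidates does not generally exist in flat space of dimension at least six. -/
/-!
On components `W_{abcd}` with `{a, b} ∩ {c, d} = ∅` every trace term of equation (4) carries a
vanishing Kronecker delta, so there `W_{abcd} = 2 L_{ab[c;d]} + 2 L_{cd[a;b]}`. Differentiate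
twice and antisymmetrise `∂_f ∂_e W_{abcd}` over `[abf]` and over `[cde]`, the two triples being
disjoint (this needs `n ≥ 6`): each of the four resulting terms is a third derivative of `L`
carrying two indices of the same antisymmetrised triple, so the result vanishes. The Weyl
candidate `x⁴ x⁵ C`, where `C` is the constant Weyl candidate built from `e₀ ∧ e₁` and
`e₂ ∧ e₃`, violates this: its component `(a, b, f | c, d, e) = (0, 1, 4 | 2, 3, 5)` is `2 / 9`.
-/

open scoped ContDiff

noncomputable section

/-- Partial derivative `∂ᵢ f` of a scalar field on flat `ℝⁿ` (points represented as
`Fin n → ℝ`, standard coordinates) in the `i`-th coordinate direction.  In Cartesian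
coordinates on flat space this is the covariant derivative `;i`. -/
def pd {n : ℕ} (i : Fin n) (f : (Fin n → ℝ) → ℝ) : (Fin n → ℝ) → ℝ :=
  fun x => fderiv ℝ f x (Pi.single i 1)

/-- Components `η_{ab}` of the constant diagonal metric with diagonal entries `η a = ±1`;
since the entries are `±1` these coincide with the components `η^{ab}` of the inverse
metric. -/
def gm {n : ℕ} (η : Fin n → ℝ) (a b : Fin n) : ℝ := if a = b then η a else 0

/-- Antisymmetrization over two index slots. -/
def asym2 {n : ℕ} (T : Fin n → Fin n → ℝ) (a b : Fin n) : ℝ := (T a b - T b a) / 2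

/-- Antisymmetrization over three index slots. -/
def asym3 {n : ℕ} (T : Fin n → Fin n → Fin n → ℝ) (a b c : Fin n) : ℝ :=
  (T a b c - T a c b - T b a c + T b c a + T c a b - T c b a) / 6

/-- Simultaneous antisymmetrization over a pair of upper slots and a pair of lower slots. -/
def asym22 {n : ℕ} (T : Fin n → Fin n → Fin n → Fin n → ℝ) (a b c d : Fin n) : ℝ :=
  (T a b c d - T b a c d - T a b d c + T b a d c) / 4

/-- Simultaneous antisymmetrization over a triple of upper slots and a triple of lower
slots (arguments ordered as `T upper₁ upper₂ upper₃ lower₁ lower₂ lower₃`). -/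
def asym33 {n : ℕ} (T : Fin n → Fin n → Fin n → Fin n → Fin n → Fin n → ℝ)
    (a b f c d e : Fin n) : ℝ :=
  asym3 (fun a b f => asym3 (fun c d e => T a b f c d e) c d e) a b f

/-- A Weyl candidate: a 4-tensor field with the index symmetries (3a)–(3d):
antisymmetry in the first and in the second index pair, symmetry under interchange of the
two pairs, vanishing cyclic sum `W_{a[bcd]} = 0`, and vanishing trace `W^a{}_{bad} = 0`
(the trace being taken with the metric `η`). -/
def WeylCandidate {n : ℕ} (η : Fin n → ℝ)
    (W : (Fin n → ℝ) → Fin n → Fin n → Fin n → Fin n → ℝ) : Prop :=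
  (∀ x a b c d, W x a b c d = - W x b a c d) ∧
  (∀ x a b c d, W x a b c d = - W x a b d c) ∧
  (∀ x a b c d, W x a b c d = W x c d a b) ∧
  (∀ x a b c d, asym3 (fun b c d => W x a b c d) b c d = 0) ∧
  (∀ x b d, ∑ a, η a * W x a b a d = 0)

/-- The right-hand side of the Lanczos potential equation (4), in the equivalent fully
lowered form (the free indices `a b`, raised in the paper, are lowered with the invertible
diagonal metric `η`, which only multiplies each component equation by `η a * η b ≠ 0`).
Each contracted (dummy) index pair carries a factor `η i` coming from the inverse
metric. -/
def rhs4 {n : ℕ} (η : Fin n → ℝ) (L : (Fin n → ℝ) → Fin n → Fin n → Fin n → ℝ)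
    (x : Fin n → ℝ) (a b c d : Fin n) : ℝ :=
  -- 2 L^{ab}{}_{[c;d]}
  (pd d (L · a b c) x - pd c (L · a b d) x)
  -- + 2 L_{cd}{}^{[a;b]}
  + (pd b (L · c d a) x - pd a (L · c d b) x)
  -- − (4/(n−2)) δ^{[a}_{[c} ( L^{b]i}{}_{d];i} − L^{b]i}{}_{|i|;d]} + L_{d]i}{}^{b];i} − L_{d]i}{}^{|i|;b]} )
  - (4 / ((n : ℝ) - 2)) *
      asym22 (fun a b c d =>
        gm η a c *
          ∑ i, η i *
            (pd i (L · b i d) x - pd d (L · b i i) x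
              + pd i (L · d i b) x - pd b (L · d i i) x)) a b c d
  -- + (8/((n−2)(n−1))) δ^{a}_{[c} δ^{b}_{d]} L^{ij}{}_{i;j}
  + (8 / (((n : ℝ) - 2) * ((n : ℝ) - 1))) *
      ((gm η a c * gm η b d - gm η a d * gm η b c) / 2) *
      ∑ i, ∑ j, η i * η j * pd j (L · i j i) x

/-- Equation (4): `L` is a Lanczos potential for `W` (fully lowered, equivalent form). -/
def Eq4 {n : ℕ} (η : Fin n → ℝ)
    (W : (Fin n → ℝ) → Fin n → Fin n → Fin n → Fin n → ℝ)
    (L : (Fin n → ℝ) → Fin n → Fin n → Fin n → ℝ) : Prop :=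
  ∀ x a b c d, W x a b c d = rhs4 η L x a b c d

/-- The right-hand side of equation (5) (equation (4) in the Lanczos algebraic gauge
`L_{ab}{}^b = 0`), fully lowered form:
`2 L^{ab}{}_{[c;d]} + 2 L_{cd}{}^{[a;b]} − (4/(n−2)) δ^{[a}_{[c} ( L^{b]i}{}_{d];i} + L_{d]i}{}^{b];i} )`. -/
def rhs5 {n : ℕ} (η : Fin n → ℝ) (L : (Fin n → ℝ) → Fin n → Fin n → Fin n → ℝ)
    (x : Fin n → ℝ) (a b c d : Fin n) : ℝ :=
  (pd d (L · a b c) x - pd c (L · a b d) x)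
  + (pd b (L · c d a) x - pd a (L · c d b) x)
  - (4 / ((n : ℝ) - 2)) *
      asym22 (fun a b c d =>
        gm η a c * ∑ i, η i * (pd i (L · b i d) x + pd i (L · d i b) x)) a b c d

/-- Equation (5). -/
def Eq5 {n : ℕ} (η : Fin n → ℝ)
    (W : (Fin n → ℝ) → Fin n → Fin n → Fin n → Fin n → ℝ)
    (L : (Fin n → ℝ) → Fin n → Fin n → Fin n → ℝ) : Prop :=
  ∀ x a b c d, W x a b c d = rhs5 η L x a b c d

/-- Constraint (8), fully lowered form:
`W^{[ab}{}_{[cd;e]}{}^{f]} = (1/(n−4)) δ^{[a}_{[c} W^{bf]}{}_{de];i}{}^{i}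
 + (2/(n−4)) δ^{[a}_{[c} W^{|i|b}{}_{de];i}{}^{f]} + (2/(n−4)) δ^{[a}_{[c} W^{bf]}{}_{|i|d;e]}{}^{i}
 + (4/((n−3)(n−4))) δ^{[a}_{[c} δ^{b}_{d} W^{f]i}{}_{e]j;i}{}^{j}`. -/
def Constraint8 {n : ℕ} (η : Fin n → ℝ)
    (W : (Fin n → ℝ) → Fin n → Fin n → Fin n → Fin n → ℝ) : Prop :=
  ∀ x a b f c d e,
    asym33 (fun a b f c d e => pd f (pd e (W · a b c d)) x) a b f c d e =
      (1 / ((n : ℝ) - 4)) *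
          asym33 (fun a b f c d e =>
            gm η a c * ∑ i, η i * pd i (pd i (W · b f d e)) x) a b f c d e
      + (2 / ((n : ℝ) - 4)) *
          asym33 (fun a b f c d e =>
            gm η a c * ∑ i, η i * pd f (pd i (W · i b d e)) x) a b f c d e
      + (2 / ((n : ℝ) - 4)) *
          asym33 (fun a b f c d e =>
            gm η a c * ∑ i, η i * pd i (pd e (W · b f i d)) x) a b f c d e
      + (4 / (((n : ℝ) - 3) * ((n : ℝ) - 4))) *
          asym33 (fun a b f c d e =>
            gm η a c * gm η b d *
              ∑ i, ∑ j, η i * η j * pd j (pd i (W · f i e j)) x) a b f c d e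

/-- Constraint (10), fully lowered form:
`W^{[ab}{}_{cd;i}{}^{|i|e]} + 2 W^{[ab}{}_{i[c;d]}{}^{|i|e]}
 + (4/(n−3)) δ^{[a}_{[c} W^{b|i}{}_{d]j;i}{}^{j|e]} = 0`,
antisymmetrized over the upper indices `a b e` and (where indicated) the lower indices
`c d`. -/
def Constraint10 {n : ℕ} (η : Fin n → ℝ)
    (W : (Fin n → ℝ) → Fin n → Fin n → Fin n → Fin n → ℝ) : Prop :=
  ∀ x a b e c d,
    asym3 (fun a b e =>
      (∑ i, η i * pd e (pd i (pd i (W · a b c d))) x)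
      + 2 * asym2 (fun c d =>
            ∑ i, η i * pd e (pd i (pd d (W · a b i c))) x) c d
      + (4 / ((n : ℝ) - 3)) * asym2 (fun c d =>
            gm η a c *
              ∑ i, ∑ j, η i * η j * pd e (pd j (pd i (W · b i d j))) x) c d) a b e
    = 0

variable {n : ℕ}

section PartialDerivative

lemma pd_contDiff {m : WithTop ℕ∞} {f : (Fin n → ℝ) → ℝ} (hf : ContDiff ℝ (m + 1) f)
    (i : Fin n) : ContDiff ℝ m (pd i f) := by
  exact (ContinuousLinearMap.apply ℝ ℝ (Pi.single i 1)).contDiff.comp (hf.fderiv_right le_rfl)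

lemma pd_comm {f : (Fin n → ℝ) → ℝ} (hf : ContDiff ℝ 2 f) (i j : Fin n) (x : Fin n → ℝ) :
    pd i (pd j f) x = pd j (pd i f) x := by
  have hd : DifferentiableAt ℝ (fderiv ℝ f) x :=
    (hf.fderiv_right (m := 1) (by norm_num)).differentiable one_ne_zero x
  have hpd : ∀ u v : Fin n,
      pd u (pd v f) x = fderiv ℝ (fderiv ℝ f) x (Pi.single u 1) (Pi.single v 1) := by
    intro u v
    change fderiv ℝ (fun y => fderiv ℝ f y (Pi.single v 1)) x (Pi.single u 1) = _
    rw [fderiv_clm_apply hd (differentiableAt_const _)]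
    simp
  rw [hpd, hpd, (hf.contDiffAt.isSymmSndFDerivAt (by simp))]

lemma pd_add {f g : (Fin n → ℝ) → ℝ} (hf : Differentiable ℝ f) (hg : Differentiable ℝ g)
    (i : Fin n) : pd i (fun x => f x + g x) = fun x => pd i f x + pd i g x := by
  funext x
  simp only [pd, fderiv_fun_add (hf x) (hg x), add_apply]

lemma pd_sub {f g : (Fin n → ℝ) → ℝ} (hf : Differentiable ℝ f) (hg : Differentiable ℝ g)
    (i : Fin n) : pd i (fun x => f x - g x) = fun x => pd i f x - pd i g x := by
  funext x
  simp only [pd, fderiv_fun_sub (hf x) (hg x), sub_apply]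

lemma fderiv_coord (i : Fin n) (x : Fin n → ℝ) :
    fderiv ℝ (fun y : Fin n → ℝ => y i) x = ContinuousLinearMap.proj i :=
  (ContinuousLinearMap.proj (R := ℝ) (φ := fun _ : Fin n => ℝ) i).fderiv

lemma pd_coord_mul_coord_mul_const (i j e : Fin n) (c : ℝ) :
    pd e (fun x => x i * x j * c)
      = fun x => x i * (if j = e then c else 0) + x j * (if i = e then c else 0) := by
  funext x
  simp (disch := fun_prop) only [pd, fderiv_mul_const, fderiv_fun_mul, fderiv_coord]
  simp only [smul_apply, add_apply, ContinuousLinearMap.proj_apply,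
    Pi.single_apply, smul_eq_mul]
  split_ifs <;> ring

lemma pd_pd_coord_mul_coord_mul_const (i j e f : Fin n) (c : ℝ) (x : Fin n → ℝ) :
    pd f (pd e (fun x => x i * x j * c)) x
      = (if i = f then (if j = e then c else 0) else 0)
          + (if j = f then (if i = e then c else 0) else 0) := by
  rw [pd_coord_mul_coord_mul_const]
  simp (disch := fun_prop) only [pd, fderiv_fun_add, fderiv_mul_const, fderiv_coord]
  split_ifs <;> simp_all

end PartialDerivative

section Antisymmetrization

variable {T T' : Fin n → Fin n → Fin n → Fin n → Fin n → Fin n → ℝ}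

lemma asym3_eq_zero_of_swap23 {S : Fin n → Fin n → Fin n → ℝ}
    (h : ∀ x y z, S x y z = S x z y) (a b c : Fin n) : asym3 S a b c = 0 := by
  simp only [asym3]
  linarith [h a b c, h b a c, h c a b]

lemma asym3_eq_zero_of_swap13 {S : Fin n → Fin n → Fin n → ℝ}
    (h : ∀ x y z, S x y z = S z y x) (a b c : Fin n) : asym3 S a b c = 0 := by
  simp only [asym3]
  linarith [h a b c, h a c b, h b a c]

lemma asym33_add (a b f c d e : Fin n) :
    asym33 (fun a b f c d e => T a b f c d e + T' a b f c d e) a b f c d e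
      = asym33 T a b f c d e + asym33 T' a b f c d e := by
  simp only [asym33, asym3]
  ring

lemma asym33_sub (a b f c d e : Fin n) :
    asym33 (fun a b f c d e => T a b f c d e - T' a b f c d e) a b f c d e
      = asym33 T a b f c d e - asym33 T' a b f c d e := by
  simp only [asym33, asym3]
  ring

lemma asym33_eq_zero_of_lower_eq_zero {c d e : Fin n} (h : ∀ a b f, asym3 (T a b f) c d e = 0)
    (a b f : Fin n) : asym33 T a b f c d e = 0 := by
  simp only [asym33, h]
  simp [asym3]

lemma asym33_eq_zero_of_lower_swap23 (h : ∀ a b f c d e, T a b f c d e = T a b f c e d)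
    (a b f c d e : Fin n) : asym33 T a b f c d e = 0 :=
  asym33_eq_zero_of_lower_eq_zero (fun a b f => asym3_eq_zero_of_swap23 (h a b f) c d e) a b f

lemma asym33_eq_zero_of_lower_swap13 (h : ∀ a b f c d e, T a b f c d e = T a b f e d c)
    (a b f c d e : Fin n) : asym33 T a b f c d e = 0 :=
  asym33_eq_zero_of_lower_eq_zero (fun a b f => asym3_eq_zero_of_swap13 (h a b f) c d e) a b f

lemma asym33_eq_zero_of_upper_swap23 (h : ∀ a b f c d e, T a b f c d e = T a f b c d e)
    (a b f c d e : Fin n) : asym33 T a b f c d e = 0 :=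
  asym3_eq_zero_of_swap23 (fun a b f => by simp only [h a b f]) a b f

lemma asym33_eq_zero_of_upper_swap13 (h : ∀ a b f c d e, T a b f c d e = T f b a c d e)
    (a b f c d e : Fin n) : asym33 T a b f c d e = 0 :=
  asym3_eq_zero_of_swap13 (fun a b f => by simp only [h a b f]) a b f

lemma asym33_congr {a b f c d e : Fin n}
    (h : ∀ x ∈ [a, b, f], ∀ y ∈ [a, b, f], ∀ z ∈ [a, b, f],
      ∀ u ∈ [c, d, e], ∀ v ∈ [c, d, e], ∀ w ∈ [c, d, e], T x y z u v w = T' x y z u v w) :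
    asym33 T a b f c d e = asym33 T' a b f c d e := by
  simp only [asym33, asym3]
  simp (disch := simp) only [h]

end Antisymmetrization

section IntegrabilityCondition

lemma asym33_curl_eq_zero (Q : Fin n → Fin n → Fin n → Fin n → Fin n → Fin n → ℝ)
    (hQ12 : ∀ i j k p q r, Q i j k p q r = Q j i k p q r)
    (hQ23 : ∀ i j k p q r, Q i j k p q r = Q i k j p q r) (a b f c d e : Fin n) :
    asym33 (fun a b f c d e =>
      (Q f e d a b c - Q f e c a b d) + (Q f e b c d a - Q f e a c d b)) a b f c d e = 0 := by
  have hQ13 : ∀ i j k p q r, Q i j k p q r = Q k j i p q r := fun i j k p q r =>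
    (hQ12 ..).trans ((hQ23 ..).trans (hQ12 ..))
  simp only [asym33_add, asym33_sub,
    asym33_eq_zero_of_lower_swap23 (fun a b f c d e => hQ23 f e d a b c),
    asym33_eq_zero_of_lower_swap13 (fun a b f c d e => hQ23 f e c a b d),
    asym33_eq_zero_of_upper_swap23 (fun a b f c d e => hQ13 f e b c d a),
    asym33_eq_zero_of_upper_swap13 (fun a b f c d e => hQ13 f e a c d b)]
  norm_num

variable (η : Fin n → ℝ) {L : (Fin n → ℝ) → Fin n → Fin n → Fin n → ℝ}

lemma rhs4_of_ne (x : Fin n → ℝ) {a b c d : Fin n}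
    (hac : a ≠ c) (had : a ≠ d) (hbc : b ≠ c) (hbd : b ≠ d) :
    rhs4 η L x a b c d
      = (pd d (L · a b c) x - pd c (L · a b d) x) + (pd b (L · c d a) x - pd a (L · c d b) x) := by
  simp [rhs4, asym22, gm, hac, had, hbc, hbd]

lemma pd_pd_rhs4_of_ne (hL : ∀ a b c, ContDiff ℝ 3 (L · a b c)) (x : Fin n → ℝ)
    (e f : Fin n) {a b c d : Fin n} (hac : a ≠ c) (had : a ≠ d) (hbc : b ≠ c) (hbd : b ≠ d) :
    pd f (pd e (rhs4 η L · a b c d)) x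
      = (pd f (pd e (pd d (L · a b c))) x - pd f (pd e (pd c (L · a b d))) x)
        + (pd f (pd e (pd b (L · c d a))) x - pd f (pd e (pd a (L · c d b))) x) := by
  have hC2 (k p q r : Fin n) : ContDiff ℝ 2 (pd k (L · p q r)) := pd_contDiff (hL p q r) k
  have hD1 (k p q r : Fin n) : Differentiable ℝ (pd k (L · p q r)) :=
    (hC2 k p q r).differentiable two_ne_zero
  have hD2 (j k p q r : Fin n) : Differentiable ℝ (pd j (pd k (L · p q r))) :=
    (pd_contDiff (hC2 k p q r) j).differentiable one_ne_zero
  rw [funext fun x => rhs4_of_ne η x hac had hbc hbd,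
    pd_add ((hD1 d a b c).fun_sub (hD1 c a b d)) ((hD1 b c d a).fun_sub (hD1 a c d b)),
    pd_sub (hD1 d a b c) (hD1 c a b d), pd_sub (hD1 b c d a) (hD1 a c d b),
    pd_add ((hD2 e d a b c).fun_sub (hD2 e c a b d)) ((hD2 e b c d a).fun_sub (hD2 e a c d b)),
    pd_sub (hD2 e d a b c) (hD2 e c a b d), pd_sub (hD2 e b c d a) (hD2 e a c d b)]

theorem asym33_pd_pd_rhs4_eq_zero (hL : ∀ a b c, ContDiff ℝ 3 (L · a b c)) (x : Fin n → ℝ)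
    {a b f c d e : Fin n} (hdisj : ∀ u ∈ [a, b, f], ∀ v ∈ [c, d, e], u ≠ v) :
    asym33 (fun a b f c d e => pd f (pd e (rhs4 η L · a b c d)) x) a b f c d e = 0 := by
  have hQ12 (i j k p q r : Fin n) :
      pd i (pd j (pd k (L · p q r))) x = pd j (pd i (pd k (L · p q r))) x :=
    pd_comm (pd_contDiff (hL p q r) k) i j x
  have hQ23 (i j k p q r : Fin n) :
      pd i (pd j (pd k (L · p q r))) x = pd i (pd k (pd j (L · p q r))) x := by
    rw [funext (pd_comm ((hL p q r).of_le (by norm_num)) j k)]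
  rw [asym33_congr fun a ha b hb f hf c hc d hd e he =>
    pd_pd_rhs4_of_ne η hL x e f (hdisj a ha c hc) (hdisj a ha d hd) (hdisj b hb c hc)
      (hdisj b hb d hd)]
  exact asym33_curl_eq_zero (fun i j k p q r => pd i (pd j (pd k (L · p q r))) x) hQ12 hQ23 ..

end IntegrabilityCondition

section BivectorWeyl

lemma WeylCandidate.mul_left {η : Fin n → ℝ}
    {W : (Fin n → ℝ) → Fin n → Fin n → Fin n → Fin n → ℝ} (hW : WeylCandidate η W)
    (φ : (Fin n → ℝ) → ℝ) : WeylCandidate η (fun x a b c d => φ x * W x a b c d) := by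
  obtain ⟨h₁, h₂, h₃, h₄, h₅⟩ := hW
  refine ⟨fun x a b c d => ?_, fun x a b c d => ?_, fun x a b c d => ?_, fun x a b c d => ?_,
    fun x b d => ?_⟩
  · dsimp only; rw [h₁, neg_mul_eq_mul_neg]
  · dsimp only; rw [h₂, neg_mul_eq_mul_neg]
  · dsimp only; rw [h₃]
  · have := h₄ x a b c d
    simp only [asym3] at this ⊢
    linear_combination φ x * this
  · simp only [mul_left_comm (η _), ← Finset.mul_sum, h₅, mul_zero]

def basisBivector (p q a b : Fin n) : ℝ :=
  (if a = p then 1 else 0) * (if b = q then 1 else 0)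
    - (if a = q then 1 else 0) * (if b = p then 1 else 0)

lemma basisBivector_self (p q a : Fin n) : basisBivector p q a a = 0 := by
  simp only [basisBivector]; ring

/-- With `U = e_p ∧ e_q = basisBivector p q`, `V = e_r ∧ e_s` and `S = U ⊗ V + V ⊗ U`, this is `3 (S - B S)`,
where `B S_{abcd} = (S_{abcd} + S_{acdb} + S_{adbc}) / 3` is the Bianchi projection. -/
def bivectorWeyl (p q r s a b c d : Fin n) : ℝ :=
  2 * basisBivector p q a b * basisBivector r s c d
    + 2 * basisBivector r s a b * basisBivector p q c d
    + basisBivector p q a c * basisBivector r s b d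
    + basisBivector r s a c * basisBivector p q b d
    - basisBivector p q a d * basisBivector r s b c
    - basisBivector r s a d * basisBivector p q b c

lemma bivectorWeyl_trace {p q r s : Fin n} (hpr : p ≠ r) (hps : p ≠ s) (hqr : q ≠ r)
    (hqs : q ≠ s) (a b d : Fin n) : bivectorWeyl p q r s a b a d = 0 := by
  by_cases hap : a = p
  · subst hap; simp [bivectorWeyl, basisBivector, hpr, hps]
  by_cases haq : a = q
  · subst haq; simp [bivectorWeyl, basisBivector, hqr, hqs]
  · simp only [bivectorWeyl, basisBivector_self, zero_mul, add_zero]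
    simp [basisBivector, hap, haq]

lemma weylCandidate_bivectorWeyl (η : Fin n → ℝ) {p q r s : Fin n} (hpr : p ≠ r)
    (hps : p ≠ s) (hqr : q ≠ r) (hqs : q ≠ s) :
    WeylCandidate η (fun _ => bivectorWeyl p q r s) := by
  refine ⟨fun _ a b c d => ?_, fun _ a b c d => ?_, fun _ a b c d => ?_, fun _ a b c d => ?_,
    fun _ b d => ?_⟩
  · simp only [bivectorWeyl, basisBivector]; ring
  · simp only [bivectorWeyl, basisBivector]; ring
  · simp only [bivectorWeyl, basisBivector]; ring
  · simp only [asym3, bivectorWeyl, basisBivector]; ring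
  · simp [bivectorWeyl_trace hpr hps hqr hqs]

end BivectorWeyl

section NonExistence

open Function

variable (ι : Fin 6 → Fin n)

def quadraticBivectorWeyl (x : Fin n → ℝ) (a b c d : Fin n) : ℝ :=
  x (ι 4) * x (ι 5) * bivectorWeyl (ι 0) (ι 1) (ι 2) (ι 3) a b c d

lemma contDiff_quadraticBivectorWeyl (a b c d : Fin n) :
    ContDiff ℝ ∞ (quadraticBivectorWeyl ι · a b c d) := by
  unfold quadraticBivectorWeyl
  fun_prop

lemma weylCandidate_quadraticBivectorWeyl (η : Fin n → ℝ) (hι : Injective ι) :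
    WeylCandidate η (quadraticBivectorWeyl ι) :=
  (weylCandidate_bivectorWeyl η (by simp [hι.eq_iff]) (by simp [hι.eq_iff])
    (by simp [hι.eq_iff]) (by simp [hι.eq_iff])).mul_left fun x => x (ι 4) * x (ι 5)

lemma asym33_pd_pd_quadraticBivectorWeyl (hι : Injective ι) :
    asym33 (fun a b f c d e => pd f (pd e (quadraticBivectorWeyl ι · a b c d)) 0)
      (ι 0) (ι 1) (ι 4) (ι 2) (ι 3) (ι 5) = 2 / 9 := by
  simp only [quadraticBivectorWeyl, asym33, asym3, pd_pd_coord_mul_coord_mul_const]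
  norm_num [bivectorWeyl, basisBivector, hι.eq_iff, Fin.ext_iff]

theorem not_exists_eq4_quadraticBivectorWeyl (η : Fin n → ℝ) (hι : Injective ι) :
    ¬ ∃ L : (Fin n → ℝ) → Fin n → Fin n → Fin n → ℝ,
      (∀ a b c, ContDiff ℝ 3 (L · a b c)) ∧ Eq4 η (quadraticBivectorWeyl ι) L := by
  rintro ⟨L, hL, hW⟩
  have hrhs (a b c d : Fin n) : (rhs4 η L · a b c d) = (quadraticBivectorWeyl ι · a b c d) :=
    funext fun x => (hW x a b c d).symm
  have hzero := asym33_pd_pd_rhs4_eq_zero η hL 0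
    (a := ι 0) (b := ι 1) (f := ι 4) (c := ι 2) (d := ι 3) (e := ι 5) (by simp [hι.eq_iff])
  simp only [hrhs, asym33_pd_pd_quadraticBivectorWeyl ι hι] at hzero
  norm_num at hzero

end NonExistence

theorem lanczos_potential_does_not_generally_exist_dim_ge_six_general
    (n : ℕ) (hn : 6 ≤ n) (η : Fin n → ℝ) :
    ∃ W : (Fin n → ℝ) → Fin n → Fin n → Fin n → Fin n → ℝ,
      (∀ a b c d, ContDiff ℝ ∞ (fun x => W x a b c d)) ∧
      WeylCandidate η W ∧
      ¬ ∃ L : (Fin n → ℝ) → Fin n → Fin n → Fin n → ℝ,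
          (∀ a b c, ContDiff ℝ 3 (fun x => L x a b c)) ∧
          (∀ x a b c, L x a b c = - L x b a c) ∧
          Eq4 η W L := by
  have hι := Fin.castLE_injective hn
  refine ⟨quadraticBivectorWeyl (Fin.castLE hn), contDiff_quadraticBivectorWeyl _,
    weylCandidate_quadraticBivectorWeyl _ η hι, ?_⟩
  rintro ⟨L, hL, -, hW⟩
  exact not_exists_eq4_quadraticBivectorWeyl _ η hι ⟨L, hL, hW⟩

/-- **Non-existence in dimension `n ≥ 6`.**  For every `n ≥ 6` and every signature there
is a smooth Weyl candidate on flat `ℝⁿ` admitting no three times continuously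
differentiable Lanczos potential (with `L_{abc} = L_{[ab]c}`) via equation (4). -/
theorem lanczos_potential_does_not_generally_exist_dim_ge_six
    (n : ℕ) (hn : 6 ≤ n) (η : Fin n → ℝ) (hη : ∀ i, η i = 1 ∨ η i = -1) :
    ∃ W : (Fin n → ℝ) → Fin n → Fin n → Fin n → Fin n → ℝ,
      (∀ a b c d, ContDiff ℝ ∞ (fun x => W x a b c d)) ∧
      WeylCandidate η W ∧
      ¬ ∃ L : (Fin n → ℝ) → Fin n → Fin n → Fin n → ℝ,
          (∀ a b c, ContDiff ℝ 3 (fun x => L x a b c)) ∧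
          (∀ x a b c, L x a b c = - L x b a c) ∧
          Eq4 η W L :=
  lanczos_potential_does_not_generally_exist_dim_ge_six_general n hn η
end
end

section
/- Gauge freedom and the Lanczos algebraic gauge. Let n ≥ 3, let W_{abcd} be a smooth tensor field on flat ℝⁿ and let L_{abc} be a continuously differentiable tensor field with L_{abc} = L_{[ab]c} satisfying equation (4) for W. Then for every continuously differentiable covector field Φ_a, the tensor field L'_{abc} = L_{abc} + Φ_{[a} η_{b]c} also satisfies L'_{abc} = L'_{[ab]c} and equation (4) for the same W; moreover, if L_{[abc]} = 0 then L'_{[abc]} = 0. In particular, the choice Φ_a = −(2/(n−1)) L_{ab}^{b} produces a Lanczos potential L' for W in the Lanczos algebraic gauge, i.e. with L'_{ab}^{b} = 0. -/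
open scoped ContDiff

noncomputable section

/-!
Equation (4) involves `L` only through its first derivatives, linearly, so it suffices that
the pure-gauge term `Φ_{[a} η_{b]c}` contributes nothing. Writing `D_{ja} = Φ_{a;j}`, the
single contractions of its derivative are `((2 - n)(D_{bd} + D_{db}) - 2 η_{bd} D^i{}_i) / 2`
and the double contraction is `(1 - n) D^i{}_i / 2`: the factor `4/(n-2)` turns the first part
into exactly the negative of the two leading derivative terms, and the factor `8/((n-2)(n-1))`
turns the double contraction into the negative of the remaining trace term. The algebraic
gauge follows since the gauge term shifts the trace `L_{ab}{}^b` by `(n-1)/2 · Φ_a`.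
-/

section GaugeFreedom

variable {n : ℕ} {η : Fin n → ℝ}

theorem gm_comm (η : Fin n → ℝ) (a b : Fin n) : gm η a b = gm η b a := by
  by_cases h : a = b <;> simp [gm, h, eq_comm]

theorem eta_mul_self (hη : ∀ i, η i = 1 ∨ η i = -1) (i : Fin n) : η i * η i = 1 := by
  rcases hη i with h | h <;> simp [h]

theorem sum_eta_mul_gm_mul (hη : ∀ i, η i = 1 ∨ η i = -1) (f : Fin n → ℝ) (q : Fin n) :
    ∑ i, η i * gm η i q * f i = f q := by
  simp [gm, eta_mul_self hη]

theorem sum_eta_mul_gm_self (hη : ∀ i, η i = 1 ∨ η i = -1) :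
    ∑ i, η i * gm η i i = n := by
  simp [gm, eta_mul_self hη]

/-- `φ_{[a} η_{b]c}`. -/
def gaugeTerm (η φ : Fin n → ℝ) (a b c : Fin n) : ℝ := (φ a * gm η b c - φ b * gm η a c) / 2

theorem gaugeTerm_antisymm (φ : Fin n → ℝ) (a b c : Fin n) :
    gaugeTerm η φ a b c = -gaugeTerm η φ b a c := by
  simp only [gaugeTerm]
  ring

theorem asym3_gaugeTerm (φ : Fin n → ℝ) (a b c : Fin n) : asym3 (gaugeTerm η φ) a b c = 0 := by
  simp only [asym3, gaugeTerm, gm_comm η c b, gm_comm η c a, gm_comm η b a]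
  ring

theorem sum_eta_mul_gaugeTerm_self (hη : ∀ i, η i = 1 ∨ η i = -1) (φ : Fin n → ℝ) (a : Fin n) :
    ∑ b, η b * gaugeTerm η φ a b b = ((n : ℝ) - 1) / 2 * φ a := by
  have hterm : ∀ b, η b * gaugeTerm η φ a b b =
      (φ a * (η b * gm η b b) - η b * gm η b a * φ b) / 2 := by
    intro b
    simp only [gaugeTerm, gm_comm η a b]
    ring
  simp only [hterm, ← Finset.sum_div, Finset.sum_sub_distrib, ← Finset.mul_sum,
    sum_eta_mul_gm_mul hη, sum_eta_mul_gm_self hη]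
  ring

/-! In the following, `P j a b c` stands for the derivative `L_{abc;j}` at a point. -/

def lanczosContraction (η : Fin n → ℝ) (P : Fin n → Fin n → Fin n → Fin n → ℝ) (b d : Fin n) :
    ℝ :=
  ∑ i, η i * (P i b i d - P d b i i + P i d i b - P b d i i)

def lanczosDoubleContraction (η : Fin n → ℝ) (P : Fin n → Fin n → Fin n → Fin n → ℝ) : ℝ :=
  ∑ i, ∑ j, η i * η j * P j i j i

def lanczosOp (η : Fin n → ℝ) (P : Fin n → Fin n → Fin n → Fin n → ℝ) (a b c d : Fin n) : ℝ :=
  (P d a b c - P c a b d) + (P b c d a - P a c d b)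
  - (4 / ((n : ℝ) - 2)) * asym22 (fun a b c d => gm η a c * lanczosContraction η P b d) a b c d
  + (8 / (((n : ℝ) - 2) * ((n : ℝ) - 1))) *
      ((gm η a c * gm η b d - gm η a d * gm η b c) / 2) * lanczosDoubleContraction η P

theorem rhs4_eq_lanczosOp (L : (Fin n → ℝ) → Fin n → Fin n → Fin n → ℝ) (x : Fin n → ℝ) :
    rhs4 η L x = lanczosOp η (fun j a b c => pd j (L · a b c) x) := rfl

theorem lanczosContraction_add (P Q : Fin n → Fin n → Fin n → Fin n → ℝ) (b d : Fin n) :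
    lanczosContraction η (P + Q) b d =
      lanczosContraction η P b d + lanczosContraction η Q b d := by
  simp only [lanczosContraction, ← Finset.sum_add_distrib, Pi.add_apply]
  exact Finset.sum_congr rfl fun i _ => by ring

theorem lanczosDoubleContraction_add (P Q : Fin n → Fin n → Fin n → Fin n → ℝ) :
    lanczosDoubleContraction η (P + Q) =
      lanczosDoubleContraction η P + lanczosDoubleContraction η Q := by
  simp only [lanczosDoubleContraction, ← Finset.sum_add_distrib, Pi.add_apply, mul_add]

theorem lanczosOp_add (P Q : Fin n → Fin n → Fin n → Fin n → ℝ) (a b c d : Fin n) :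
    lanczosOp η (P + Q) a b c d = lanczosOp η P a b c d + lanczosOp η Q a b c d := by
  simp only [lanczosOp, asym22, lanczosContraction_add, lanczosDoubleContraction_add,
    Pi.add_apply]
  ring

theorem lanczosContraction_gaugeTerm (hη : ∀ i, η i = 1 ∨ η i = -1) (D : Fin n → Fin n → ℝ)
    (b d : Fin n) :
    lanczosContraction η (fun j => gaugeTerm η (D j)) b d =
      ((2 - n) * (D b d + D d b) - 2 * gm η b d * ∑ i, η i * D i i) / 2 := by
  have hterm : ∀ i, η i * (gaugeTerm η (D i) b i d - gaugeTerm η (D d) b i i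
      + gaugeTerm η (D i) d i b - gaugeTerm η (D b) d i i) =
      (η i * gm η i d * D i b + η i * gm η i b * D i d + η i * gm η i b * D d i
        + η i * gm η i d * D b i - (D d b + D b d) * (η i * gm η i i)
        - 2 * gm η b d * (η i * D i i)) / 2 := by
    intro i
    simp only [gaugeTerm, gm_comm η b i, gm_comm η d i, gm_comm η d b]
    ring
  rw [lanczosContraction, Finset.sum_congr rfl fun i _ => hterm i]
  simp only [← Finset.sum_div, Finset.sum_add_distrib, Finset.sum_sub_distrib, ← Finset.mul_sum,
    sum_eta_mul_gm_mul hη, sum_eta_mul_gm_self hη]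
  ring

theorem lanczosDoubleContraction_gaugeTerm (hη : ∀ i, η i = 1 ∨ η i = -1)
    (D : Fin n → Fin n → ℝ) :
    lanczosDoubleContraction η (fun j => gaugeTerm η (D j)) =
      (1 - n) * (∑ i, η i * D i i) / 2 := by
  have hterm : ∀ i j, η i * η j * gaugeTerm η (D j) i j i =
      (η i * (η j * gm η j i * D j i) - η i * gm η i i * (η j * D j j)) / 2 := by
    intro i j
    simp only [gaugeTerm]
    ring
  simp only [lanczosDoubleContraction, hterm, ← Finset.sum_div, Finset.sum_sub_distrib,
    ← Finset.mul_sum, sum_eta_mul_gm_mul hη, ← Finset.sum_mul, sum_eta_mul_gm_self hη]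
  ring

theorem lanczosOp_gaugeTerm (hn : 3 ≤ n) (hη : ∀ i, η i = 1 ∨ η i = -1)
    (D : Fin n → Fin n → ℝ) (a b c d : Fin n) :
    lanczosOp η (fun j => gaugeTerm η (D j)) a b c d = 0 := by
  have h2 : (n : ℝ) - 2 ≠ 0 := sub_ne_zero.2 (by exact_mod_cast (by omega : n ≠ 2))
  have h1 : (n : ℝ) - 1 ≠ 0 := sub_ne_zero.2 (by exact_mod_cast (by omega : n ≠ 1))
  simp only [lanczosOp, asym22, lanczosContraction_gaugeTerm hη,
    lanczosDoubleContraction_gaugeTerm hη, gaugeTerm, gm_comm η d a, gm_comm η c a,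
    gm_comm η d b, gm_comm η c b]
  field_simp
  ring

/-- `L_{abc} + Φ_{[a} η_{b]c}`. -/
def gaugeTransform (η : Fin n → ℝ) (L : (Fin n → ℝ) → Fin n → Fin n → Fin n → ℝ)
    (Φ : (Fin n → ℝ) → Fin n → ℝ) (x : Fin n → ℝ) (a b c : Fin n) : ℝ :=
  L x a b c + gaugeTerm η (Φ x) a b c

theorem gaugeTransform_antisymm {L : (Fin n → ℝ) → Fin n → Fin n → Fin n → ℝ}
    (hL : ∀ x a b c, L x a b c = -L x b a c) (Φ : (Fin n → ℝ) → Fin n → ℝ) (x : Fin n → ℝ)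
    (a b c : Fin n) : gaugeTransform η L Φ x a b c = -gaugeTransform η L Φ x b a c := by
  rw [gaugeTransform, gaugeTransform, hL, gaugeTerm_antisymm, neg_add]

theorem asym3_gaugeTransform (L : (Fin n → ℝ) → Fin n → Fin n → Fin n → ℝ)
    (Φ : (Fin n → ℝ) → Fin n → ℝ) (x : Fin n → ℝ) (a b c : Fin n) :
    asym3 (gaugeTransform η L Φ x) a b c = asym3 (L x) a b c := by
  have h := asym3_gaugeTerm (η := η) (Φ x) a b c
  simp only [asym3, gaugeTransform] at h ⊢
  linear_combination h

theorem sum_eta_mul_gaugeTransform_self (hη : ∀ i, η i = 1 ∨ η i = -1)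
    (L : (Fin n → ℝ) → Fin n → Fin n → Fin n → ℝ) (Φ : (Fin n → ℝ) → Fin n → ℝ)
    (x : Fin n → ℝ) (a : Fin n) :
    ∑ b, η b * gaugeTransform η L Φ x a b b =
      ∑ b, η b * L x a b b + ((n : ℝ) - 1) / 2 * Φ x a := by
  simp only [gaugeTransform, mul_add, Finset.sum_add_distrib, sum_eta_mul_gaugeTerm_self hη]

theorem pd_gaugeTransform {L : (Fin n → ℝ) → Fin n → Fin n → Fin n → ℝ}
    {Φ : (Fin n → ℝ) → Fin n → ℝ} {x : Fin n → ℝ}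
    (hL : ∀ a b c, DifferentiableAt ℝ (L · a b c) x) (hΦ : ∀ a, DifferentiableAt ℝ (Φ · a) x)
    (j a b c : Fin n) :
    pd j (gaugeTransform η L Φ · a b c) x =
      pd j (L · a b c) x + gaugeTerm η (fun r => pd j (Φ · r) x) a b c := by
  have hgauge : HasFDerivAt (fun y => gaugeTerm η (Φ y) a b c)
      ((2 : ℝ)⁻¹ • (gm η b c • fderiv ℝ (Φ · a) x - gm η a c • fderiv ℝ (Φ · b) x)) x := by
    simp only [gaugeTerm, div_eq_inv_mul]
    exact (((hΦ a).hasFDerivAt.mul_const _).sub ((hΦ b).hasFDerivAt.mul_const _)).const_mul _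
  have hsum : HasFDerivAt (gaugeTransform η L Φ · a b c)
      (fderiv ℝ (L · a b c) x + (2 : ℝ)⁻¹ • (gm η b c • fderiv ℝ (Φ · a) x
        - gm η a c • fderiv ℝ (Φ · b) x)) x :=
    (hL a b c).hasFDerivAt.add hgauge
  rw [pd, hsum.fderiv]
  simp only [add_apply, smul_apply, sub_apply, smul_eq_mul, pd, gaugeTerm, add_right_inj]
  ring

theorem rhs4_gaugeTransform (hn : 3 ≤ n) (hη : ∀ i, η i = 1 ∨ η i = -1)
    {L : (Fin n → ℝ) → Fin n → Fin n → Fin n → ℝ} {Φ : (Fin n → ℝ) → Fin n → ℝ}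
    {x : Fin n → ℝ} (hL : ∀ a b c, DifferentiableAt ℝ (L · a b c) x)
    (hΦ : ∀ a, DifferentiableAt ℝ (Φ · a) x) (a b c d : Fin n) :
    rhs4 η (gaugeTransform η L Φ) x a b c d = rhs4 η L x a b c d := by
  have hderiv : (fun j a b c => pd j (gaugeTransform η L Φ · a b c) x) =
      (fun j a b c => pd j (L · a b c) x) + fun j => gaugeTerm η (fun r => pd j (Φ · r) x) := by
    funext j a b c
    exact pd_gaugeTransform hL hΦ j a b c
  rw [rhs4_eq_lanczosOp, rhs4_eq_lanczosOp, hderiv, lanczosOp_add, lanczosOp_gaugeTerm hn hη,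
    add_zero]

theorem eq4_gaugeTransform (hn : 3 ≤ n) (hη : ∀ i, η i = 1 ∨ η i = -1)
    {W : (Fin n → ℝ) → Fin n → Fin n → Fin n → Fin n → ℝ}
    {L : (Fin n → ℝ) → Fin n → Fin n → Fin n → ℝ} {Φ : (Fin n → ℝ) → Fin n → ℝ}
    (hL : ∀ a b c, Differentiable ℝ (L · a b c)) (hΦ : ∀ a, Differentiable ℝ (Φ · a))
    (hW : Eq4 η W L) : Eq4 η W (gaugeTransform η L Φ) := fun x a b c d => by
  rw [hW, rhs4_gaugeTransform hn hη (fun a b c => hL a b c x) (fun a => hΦ a x)]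

end GaugeFreedom

theorem lanczos_gauge_freedom_general
    (n : ℕ) (hn : 3 ≤ n) (η : Fin n → ℝ) (hη : ∀ i, η i = 1 ∨ η i = -1)
    (W : (Fin n → ℝ) → Fin n → Fin n → Fin n → Fin n → ℝ)
    (L : (Fin n → ℝ) → Fin n → Fin n → Fin n → ℝ)
    (hLC1 : ∀ a b c, ContDiff ℝ 1 (fun x => L x a b c))
    (hLasym : ∀ x a b c, L x a b c = - L x b a c)
    (hEq4 : Eq4 η W L) :
    (∀ Φ : (Fin n → ℝ) → Fin n → ℝ, (∀ a, ContDiff ℝ 1 (fun x => Φ x a)) →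
      -- L'_{abc} = L_{abc} + Φ_{[a} η_{b]c}
      let L' : (Fin n → ℝ) → Fin n → Fin n → Fin n → ℝ :=
        fun x a b c => L x a b c + (Φ x a * gm η b c - Φ x b * gm η a c) / 2
      (∀ x a b c, L' x a b c = - L' x b a c) ∧
      Eq4 η W L' ∧
      ((∀ x a b c, asym3 (fun a b c => L x a b c) a b c = 0) →
        ∀ x a b c, asym3 (fun a b c => L' x a b c) a b c = 0))
    ∧
    -- the particular choice Φ_a = −(2/(n−1)) L_{ab}{}^b gives the algebraic gauge
    (let Φ₀ : (Fin n → ℝ) → Fin n → ℝ :=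
        fun x a => -(2 / ((n : ℝ) - 1)) * ∑ b, η b * L x a b b
     let L' : (Fin n → ℝ) → Fin n → Fin n → Fin n → ℝ :=
        fun x a b c => L x a b c + (Φ₀ x a * gm η b c - Φ₀ x b * gm η a c) / 2
     (∀ x a b c, L' x a b c = - L' x b a c) ∧
     Eq4 η W L' ∧
     (∀ x a, ∑ b, η b * L' x a b b = 0)) := by
  have hL : ∀ a b c, Differentiable ℝ (L · a b c) := fun a b c =>
    (hLC1 a b c).differentiable one_ne_zero
  refine ⟨fun Φ hΦ => ⟨gaugeTransform_antisymm hLasym Φ,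
    eq4_gaugeTransform hn hη hL (fun a => (hΦ a).differentiable one_ne_zero) hEq4,
    fun h x a b c => (asym3_gaugeTransform L Φ x a b c).trans (h x a b c)⟩, ?_⟩
  set Φ₀ : (Fin n → ℝ) → Fin n → ℝ := fun x a => -(2 / ((n : ℝ) - 1)) * ∑ b, η b * L x a b b
  have hΦ₀ : ∀ a, Differentiable ℝ (Φ₀ · a) := fun a => by simp only [Φ₀]; fun_prop
  refine ⟨gaugeTransform_antisymm hLasym Φ₀, eq4_gaugeTransform hn hη hL hΦ₀ hEq4, fun x a => ?_⟩
  have hn1 : (n : ℝ) - 1 ≠ 0 := sub_ne_zero.2 (by exact_mod_cast (by omega : n ≠ 1))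
  show ∑ b, η b * gaugeTransform η L Φ₀ x a b b = 0
  rw [sum_eta_mul_gaugeTransform_self hη]
  simp only [Φ₀]
  field_simp
  ring

/-- **Gauge freedom and the Lanczos algebraic gauge.**  If `L` (with
`L_{abc} = L_{[ab]c}`) satisfies equation (4) for `W`, then for every `C¹` covector field
`Φ` the tensor field `L'_{abc} = L_{abc} + Φ_{[a} η_{b]c}` again has
`L'_{abc} = L'_{[ab]c}`, satisfies equation (4) for the same `W`, and inherits
`L'_{[abc]} = 0` from `L_{[abc]} = 0`.  Moreover the particular choice
`Φ_a = −(2/(n−1)) L_{ab}{}^b` yields a Lanczos potential for `W` in the Lanczos algebraic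
gauge `L'_{ab}{}^b = 0`. -/
theorem lanczos_gauge_freedom
    (n : ℕ) (hn : 3 ≤ n) (η : Fin n → ℝ) (hη : ∀ i, η i = 1 ∨ η i = -1)
    (W : (Fin n → ℝ) → Fin n → Fin n → Fin n → Fin n → ℝ)
    (hWsmooth : ∀ a b c d, ContDiff ℝ ∞ (fun x => W x a b c d))
    (L : (Fin n → ℝ) → Fin n → Fin n → Fin n → ℝ)
    (hLC1 : ∀ a b c, ContDiff ℝ 1 (fun x => L x a b c))
    (hLasym : ∀ x a b c, L x a b c = - L x b a c)
    (hEq4 : Eq4 η W L) :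
    (∀ Φ : (Fin n → ℝ) → Fin n → ℝ, (∀ a, ContDiff ℝ 1 (fun x => Φ x a)) →
      -- L'_{abc} = L_{abc} + Φ_{[a} η_{b]c}
      let L' : (Fin n → ℝ) → Fin n → Fin n → Fin n → ℝ :=
        fun x a b c => L x a b c + (Φ x a * gm η b c - Φ x b * gm η a c) / 2
      (∀ x a b c, L' x a b c = - L' x b a c) ∧
      Eq4 η W L' ∧
      ((∀ x a b c, asym3 (fun a b c => L x a b c) a b c = 0) →
        ∀ x a b c, asym3 (fun a b c => L' x a b c) a b c = 0))
    ∧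
    -- the particular choice Φ_a = −(2/(n−1)) L_{ab}{}^b gives the algebraic gauge
    (let Φ₀ : (Fin n → ℝ) → Fin n → ℝ :=
        fun x a => -(2 / ((n : ℝ) - 1)) * ∑ b, η b * L x a b b
     let L' : (Fin n → ℝ) → Fin n → Fin n → Fin n → ℝ :=
        fun x a b c => L x a b c + (Φ₀ x a * gm η b c - Φ₀ x b * gm η a c) / 2
     (∀ x a b c, L' x a b c = - L' x b a c) ∧
     Eq4 η W L' ∧
     (∀ x a, ∑ b, η b * L' x a b b = 0)) :=
  lanczos_gauge_freedom_general n hn η hη W L hLC1 hLasym hEq4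
end
end
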